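/- arXiv:2205.06460 — 2 statements merged into one kernel-verified Lean document; each statement's English description precedes it below -/
import Mathlib

section
/- Closed-form solution of the BPDCA subproblem with ℓ₁ regularizer: let p ∈ ℝ^{d₁}, q ∈ ℝ^{d₂}, θ₁ ≥ 0, θ₂ ≥ 0. Set u = S_{θ₁}(p) and v = S_{θ₂}(q), and let t* be the unique positive real root of t³(‖u‖₂² + ‖v‖₂²) + t − 1 = 0. Then the point (h*, x*) = (−t*·u, −t*·v) is a global minimizer over ℝ^{d₁} × ℝ^{d₂} of the function Φ(h,x) = ⟨p, h⟩ + ⟨q, x⟩ + θ₁‖h‖₁ + θ₂‖x‖₁ + (1/4)(‖h‖₂² + ‖x‖₂²)² + (1/2)(‖h‖₂² + ‖x‖₂²). -/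
open Finset

/-- The soft-thresholding operator `(S_τ(w))ᵢ = sign(wᵢ)·max(|wᵢ| − τ, 0)`. -/
noncomputable def softThresh {n : ℕ} (τ : ℝ) (w : Fin n → ℝ) : Fin n → ℝ :=
  fun i => Real.sign (w i) * max (|w i| - τ) 0

/-- The objective of the BPDCA subproblem with ℓ₁ regularizer:
`Φ(h,x) = ⟨p,h⟩ + ⟨q,x⟩ + θ₁‖h‖₁ + θ₂‖x‖₁ + (1/4)(‖h‖₂²+‖x‖₂²)² + (1/2)(‖h‖₂²+‖x‖₂²)`. -/
noncomputable def subObj {d₁ d₂ : ℕ} (p : Fin d₁ → ℝ) (q : Fin d₂ → ℝ) (θ₁ θ₂ : ℝ)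
    (h : Fin d₁ → ℝ) (x : Fin d₂ → ℝ) : ℝ :=
  ∑ i, p i * h i + ∑ i, q i * x i + θ₁ * ∑ i, |h i| + θ₂ * ∑ i, |x i|
    + (1 / 4) * (∑ i, h i ^ 2 + ∑ i, x i ^ 2) ^ 2
    + (1 / 2) * (∑ i, h i ^ 2 + ∑ i, x i ^ 2)

lemma soft_abs (τ w : ℝ) (hτ : 0 ≤ τ) :
    |Real.sign w * max (|w| - τ) 0| = max (|w| - τ) 0 := by
  rcases lt_trichotomy w 0 with hw | hw | hw
  · rw [Real.sign_of_neg hw, abs_mul, abs_neg, abs_one, one_mul,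
      abs_of_nonneg (le_max_right _ _)]
  · subst hw
    simp [hτ, max_eq_right (by simp [hτ] : |(0:ℝ)| - τ ≤ 0)]
  · rw [Real.sign_of_pos hw, abs_mul, abs_one, one_mul, abs_of_nonneg (le_max_right _ _)]

lemma soft_mul (τ w : ℝ) :
    w * (Real.sign w * max (|w| - τ) 0) = |w| * max (|w| - τ) 0 := by
  rcases lt_trichotomy w 0 with hw | hw | hw
  · rw [Real.sign_of_neg hw, abs_of_neg hw]; ring
  · simp [hw]
  · rw [Real.sign_of_pos hw, abs_of_pos hw]; ring

lemma soft_key (τ w : ℝ) (hτ : 0 ≤ τ) :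
    w * (Real.sign w * max (|w| - τ) 0) - τ * |Real.sign w * max (|w| - τ) 0|
      = (Real.sign w * max (|w| - τ) 0) ^ 2 := by
  have h1 := soft_abs τ w hτ
  have h2 := soft_mul τ w
  have h3 : (Real.sign w * max (|w| - τ) 0) ^ 2 = (max (|w| - τ) 0) ^ 2 := by
    rw [← sq_abs, h1]
  rcases le_or_gt (|w| - τ) 0 with hc | hc
  · rw [h2, h1, h3, max_eq_right hc]; ring
  · rw [h2, h1, h3, max_eq_left hc.le]; ring

lemma cs_sum {n : ℕ} (f g : Fin n → ℝ) :
    ∑ i, |f i| * |g i| ≤ Real.sqrt (∑ i, f i ^ 2) * Real.sqrt (∑ i, g i ^ 2) := by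
  have h1 : (∑ i, |f i| * |g i|) ^ 2 ≤ (∑ i, |f i| ^ 2) * ∑ i, |g i| ^ 2 :=
    Finset.sum_mul_sq_le_sq_mul_sq _ _ _
  simp only [sq_abs] at h1
  rw [← Real.sqrt_mul (Finset.sum_nonneg fun i _ => sq_nonneg (f i))]
  exact Real.le_sqrt_of_sq_le h1

set_option maxHeartbeats 1000000 in
/-- Closed-form solution of the BPDCA subproblem with ℓ₁ regularizer:
with `u = S_{θ₁}(p)`, `v = S_{θ₂}(q)` and `t*` the unique positive root of
`t³(‖u‖₂² + ‖v‖₂²) + t − 1 = 0`, the point `(−t* u, −t* v)` is a global minimizer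
of `Φ` over `ℝ^{d₁} × ℝ^{d₂}`. -/
theorem subproblem_closed_form {d₁ d₂ : ℕ} (hd₁ : 0 < d₁) (hd₂ : 0 < d₂)
    (p : Fin d₁ → ℝ) (q : Fin d₂ → ℝ) (θ₁ θ₂ : ℝ) (hθ₁ : 0 ≤ θ₁) (hθ₂ : 0 ≤ θ₂)
    (u : Fin d₁ → ℝ) (v : Fin d₂ → ℝ)
    (hu : u = softThresh θ₁ p) (hv : v = softThresh θ₂ q)
    (t : ℝ) (ht : 0 < t)
    (hroot : t ^ 3 * (∑ i, u i ^ 2 + ∑ i, v i ^ 2) + t - 1 = 0) :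
    ∀ (h : Fin d₁ → ℝ) (x : Fin d₂ → ℝ),
      subObj p q θ₁ θ₂ (fun i => -t * u i) (fun i => -t * v i) ≤ subObj p q θ₁ θ₂ h x := by
  intro h x
  have hA : (0:ℝ) ≤ ∑ i, u i ^ 2 := Finset.sum_nonneg fun i _ => sq_nonneg _
  have hB : (0:ℝ) ≤ ∑ i, v i ^ 2 := Finset.sum_nonneg fun i _ => sq_nonneg _
  have hH : (0:ℝ) ≤ ∑ i, h i ^ 2 := Finset.sum_nonneg fun i _ => sq_nonneg _
  have hX : (0:ℝ) ≤ ∑ i, x i ^ 2 := Finset.sum_nonneg fun i _ => sq_nonneg _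
  set A := ∑ i, u i ^ 2 with hAdef
  set B := ∑ i, v i ^ 2 with hBdef
  set H := ∑ i, h i ^ 2 with hHdef
  set X := ∑ i, x i ^ 2 with hXdef
  have habsu : ∀ i, |u i| = max (|p i| - θ₁) 0 := fun i => by
    rw [hu]; exact soft_abs θ₁ (p i) hθ₁
  have habsv : ∀ i, |v i| = max (|q i| - θ₂) 0 := fun i => by
    rw [hv]; exact soft_abs θ₂ (q i) hθ₂
  have hkeyu : ∀ i, p i * u i - θ₁ * |u i| = u i ^ 2 := fun i => by
    rw [hu]; exact soft_key θ₁ (p i) hθ₁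
  have hkeyv : ∀ i, q i * v i - θ₂ * |v i| = v i ^ 2 := fun i => by
    rw [hv]; exact soft_key θ₂ (q i) hθ₂
  -- value at candidate
  have s1 : ∑ i, p i * u i - θ₁ * ∑ i, |u i| = A := by
    rw [hAdef, Finset.mul_sum, ← Finset.sum_sub_distrib]
    exact Finset.sum_congr rfl fun i _ => hkeyu i
  have s2 : ∑ i, q i * v i - θ₂ * ∑ i, |v i| = B := by
    rw [hBdef, Finset.mul_sum, ← Finset.sum_sub_distrib]
    exact Finset.sum_congr rfl fun i _ => hkeyv i
  have hval : subObj p q θ₁ θ₂ (fun i => -t * u i) (fun i => -t * v i)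
      = -(t * (A + B)) + (1/4) * (t^2 * (A + B))^2 + (1/2) * (t^2 * (A + B)) := by
    unfold subObj
    have e1 : ∑ i, p i * (-t * u i) = -t * ∑ i, p i * u i := by
      rw [Finset.mul_sum]; exact Finset.sum_congr rfl fun i _ => by ring
    have e2 : ∑ i, q i * (-t * v i) = -t * ∑ i, q i * v i := by
      rw [Finset.mul_sum]; exact Finset.sum_congr rfl fun i _ => by ring
    have e3 : ∑ i, |(-t * u i)| = t * ∑ i, |u i| := by
      rw [Finset.mul_sum]
      refine Finset.sum_congr rfl fun i _ => ?_
      rw [abs_mul, abs_neg, abs_of_pos ht]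
    have e4 : ∑ i, |(-t * v i)| = t * ∑ i, |v i| := by
      rw [Finset.mul_sum]
      refine Finset.sum_congr rfl fun i _ => ?_
      rw [abs_mul, abs_neg, abs_of_pos ht]
    have e5 : ∑ i, (-t * u i)^2 = t^2 * A := by
      rw [hAdef, Finset.mul_sum]; exact Finset.sum_congr rfl fun i _ => by ring
    have e6 : ∑ i, (-t * v i)^2 = t^2 * B := by
      rw [hBdef, Finset.mul_sum]; exact Finset.sum_congr rfl fun i _ => by ring
    rw [e1, e2, e3, e4, e5, e6]
    linear_combination (-t) * s1 + (-t) * s2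
  -- lower bound pointwise
  have lb1 : -(∑ i, |u i| * |h i|) ≤ ∑ i, p i * h i + θ₁ * ∑ i, |h i| := by
    rw [Finset.mul_sum, ← Finset.sum_add_distrib, ← Finset.sum_neg_distrib]
    refine Finset.sum_le_sum fun i _ => ?_
    have h2 : |p i| - θ₁ ≤ |u i| := (habsu i) ▸ le_max_left _ _
    have h1 : -(|p i| * |h i|) ≤ p i * h i := by
      rw [← abs_mul]; exact neg_abs_le _
    nlinarith [abs_nonneg (h i)]
  have lb2 : -(∑ i, |v i| * |x i|) ≤ ∑ i, q i * x i + θ₂ * ∑ i, |x i| := by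
    rw [Finset.mul_sum, ← Finset.sum_add_distrib, ← Finset.sum_neg_distrib]
    refine Finset.sum_le_sum fun i _ => ?_
    have h2 : |q i| - θ₂ ≤ |v i| := (habsv i) ▸ le_max_left _ _
    have h1 : -(|q i| * |x i|) ≤ q i * x i := by
      rw [← abs_mul]; exact neg_abs_le _
    nlinarith [abs_nonneg (x i)]
  have cs1 : ∑ i, |u i| * |h i| ≤ Real.sqrt A * Real.sqrt H := cs_sum u h
  have cs2 : ∑ i, |v i| * |x i| ≤ Real.sqrt B * Real.sqrt X := cs_sum v x
  -- combine the two Cauchy–Schwarz bounds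
  have comb : Real.sqrt A * Real.sqrt H + Real.sqrt B * Real.sqrt X
      ≤ Real.sqrt (A + B) * Real.sqrt (H + X) := by
    have step : Real.sqrt A * Real.sqrt H + Real.sqrt B * Real.sqrt X
        ≤ Real.sqrt ((A + B) * (H + X)) := by
      apply Real.le_sqrt_of_sq_le
      nth_rewrite 2 [← Real.sq_sqrt hA, ← Real.sq_sqrt hB, ← Real.sq_sqrt hH, ← Real.sq_sqrt hX]
      nlinarith [sq_nonneg (Real.sqrt A * Real.sqrt X - Real.sqrt B * Real.sqrt H)]
    calc Real.sqrt A * Real.sqrt H + Real.sqrt B * Real.sqrt X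
        ≤ Real.sqrt ((A + B) * (H + X)) := step
      _ = Real.sqrt (A + B) * Real.sqrt (H + X) := Real.sqrt_mul (by linarith) _
  set c := Real.sqrt (A + B) with hcdef
  set r := Real.sqrt (H + X) with hrdef
  have hc2 : c ^ 2 = A + B := Real.sq_sqrt (by linarith)
  have hr2 : r ^ 2 = H + X := Real.sq_sqrt (by linarith)
  have hcn : 0 ≤ c := Real.sqrt_nonneg _
  have hrn : 0 ≤ r := Real.sqrt_nonneg _
  have hcc : c * (t ^ 3 * c ^ 2 + t - 1) = 0 := by rw [hc2]; rw [hroot]; ring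
  have scalar : -(t * (A + B)) + (1/4) * (t^2 * (A + B))^2 + (1/2) * (t^2 * (A + B))
      ≤ -(c * r) + (1/4) * (H + X)^2 + (1/2) * (H + X) := by
    rw [← hc2, ← hr2]
    have hQ : (0:ℝ) ≤ (1/4) * (r - t*c)^2 * ((r + t*c)^2 + 2*(t*c)^2 + 2) := by positivity
    have e : (-(c*r) + (1/4) * (r^2)^2 + (1/2) * (r^2))
        - (-(t * c^2) + (1/4) * (t^2 * c^2)^2 + (1/2) * (t^2 * c^2))
        = (1/4) * (r - t*c)^2 * ((r + t*c)^2 + 2*(t*c)^2 + 2)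
          + (r - t*c) * (c * (t^3 * c^2 + t - 1)) := by ring
    rw [hcc, mul_zero, add_zero] at e
    nlinarith [hQ, e]
  have final : -(c * r) + (1/4) * (H + X)^2 + (1/2) * (H + X) ≤ subObj p q θ₁ θ₂ h x := by
    unfold subObj
    linarith [lb1, lb2, cs1, cs2, comb]
  linarith [hval.le.trans (scalar.trans final)]
end

section
/- Final Hessian bound in the proof of Theorem 1: let L = ∑_{j=1}^m (3‖b_j‖₂⁴ + 3‖a_j‖₂⁴ + ‖b_j‖₂²‖a_j‖₂² + |y_j|²‖b_j‖₂² + ‖a_j‖₂²). Then for all h, u ∈ ℝ^{d₁} and x, v ∈ ℝ^{d₂}: ∑_{j=1}^m (2|(Bh)_j|² + |(Ax)_j|² + |y_j|²)|(Bu)_j|² + Re ∑_{j=1}^m conj((Bu)_j)²·(Bh)_j² + ∑_{j=1}^m (|(Bh)_j|² + 2|(Ax)_j|² + 1)|(Av)_j|² + Re ∑_{j=1}^m conj((Av)_j)²·(Ax)_j² + 2·Re ∑_{j=1}^m [ conj((Bu)_j (Av)_j)·(Bh)_j (Ax)_j + conj((Bu)_j)·(Av)_j·(Bh)_j·conj((Ax)_j)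 ] ≤ L·(‖h‖₂² + ‖x‖₂² + 1)·(‖u‖₂² + ‖v‖₂²). -/
/-! Row by row, with `p, q, r, s = (Bu)ⱼ, (Av)ⱼ, (Bh)ⱼ, (Ax)ⱼ`: each real part is at most the
modulus of its argument, and the two cross terms, of modulus `|p q r s|` each, are absorbed by
AM-GM into `2|p|²|s|² + 2|q|²|r|²`. The `j`-th summand is thus at most
`3(|r|² + |s|²)(|p|² + |q|²) + |yⱼ|²|p|² + |q|²`, and Cauchy-Schwarz `|(Mw)ⱼ|² ≤ ‖mⱼ‖² ‖w‖²`
leaves coefficients `3‖bⱼ‖⁴, 3‖bⱼ‖²‖aⱼ‖², 3‖aⱼ‖⁴, |yⱼ|²‖bⱼ‖², ‖aⱼ‖²`, each at most the `j`-th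
summand of `L` (the middle one since `2‖bⱼ‖²‖aⱼ‖² ≤ ‖bⱼ‖⁴ + ‖aⱼ‖⁴`). -/

open Finset

/-- Complexification of a real vector followed by matrix-vector multiplication. -/
noncomputable def cMulVec {m d : ℕ} (M : Matrix (Fin m) (Fin d) ℂ) (h : Fin d → ℝ) :
    Fin m → ℂ :=
  M.mulVec fun i => (h i : ℂ)

/-- Squared Euclidean norm `‖bⱼ‖₂²` of the conjugate transpose of the `j`-th row of `M`. -/
noncomputable def rowNormSq {m d : ℕ} (M : Matrix (Fin m) (Fin d) ℂ) (j : Fin m) : ℝ :=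
  ∑ i, ‖M j i‖ ^ 2

open ComplexConjugate

lemma norm_cMulVec_sq_le {m d : ℕ} (M : Matrix (Fin m) (Fin d) ℂ) (w : Fin d → ℝ) (j : Fin m) :
    ‖cMulVec M w j‖ ^ 2 ≤ rowNormSq M j * ∑ i, w i ^ 2 := by
  calc ‖cMulVec M w j‖ ^ 2
      ≤ (∑ i, ‖M j i‖ * |w i|) ^ 2 := by
        gcongr
        simpa [cMulVec, Matrix.mulVec, dotProduct, Complex.norm_real] using
          norm_sum_le univ fun i => M j i * (w i : ℂ)
    _ ≤ (∑ i, ‖M j i‖ ^ 2) * ∑ i, |w i| ^ 2 := sum_mul_sq_le_sq_mul_sq _ _ _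
    _ = rowNormSq M j * ∑ i, w i ^ 2 := by simp [rowNormSq, sq_abs]

lemma rowNormSq_nonneg {m d : ℕ} (M : Matrix (Fin m) (Fin d) ℂ) (j : Fin m) :
    0 ≤ rowNormSq M j :=
  sum_nonneg fun _ _ => sq_nonneg _

/-- The `j`-th summand of the quadratic form, for `p, q, r, s = (Bu)ⱼ, (Av)ⱼ, (Bh)ⱼ, (Ax)ⱼ`
and `Y = |yⱼ|²`. -/
noncomputable def hessianSummand (p q r s : ℂ) (Y : ℝ) : ℝ :=
  (2 * ‖r‖ ^ 2 + ‖s‖ ^ 2 + Y) * ‖p‖ ^ 2 + (conj p ^ 2 * r ^ 2).re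
    + (‖r‖ ^ 2 + 2 * ‖s‖ ^ 2 + 1) * ‖q‖ ^ 2 + (conj q ^ 2 * s ^ 2).re
    + 2 * (conj (p * q) * (r * s) + conj p * q * r * conj s).re

lemma hessianSummand_le (p q r s : ℂ) (Y : ℝ) :
    hessianSummand p q r s Y
      ≤ 3 * (‖r‖ ^ 2 + ‖s‖ ^ 2) * (‖p‖ ^ 2 + ‖q‖ ^ 2) + Y * ‖p‖ ^ 2 + ‖q‖ ^ 2 := by
  have hpr : (conj p ^ 2 * r ^ 2).re ≤ ‖p‖ ^ 2 * ‖r‖ ^ 2 :=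
    (Complex.re_le_norm _).trans_eq (by simp)
  have hqs : (conj q ^ 2 * s ^ 2).re ≤ ‖q‖ ^ 2 * ‖s‖ ^ 2 :=
    (Complex.re_le_norm _).trans_eq (by simp)
  have hcross : (conj (p * q) * (r * s) + conj p * q * r * conj s).re
      ≤ 2 * ((‖p‖ * ‖s‖) * (‖q‖ * ‖r‖)) :=
    calc _ ≤ ‖conj (p * q) * (r * s)‖ + ‖conj p * q * r * conj s‖ :=
          (Complex.re_le_norm _).trans (norm_add_le _ _)
      _ = _ := by simp only [norm_mul, Complex.norm_conj]; ring
  have amgm := two_mul_le_add_sq (‖p‖ * ‖s‖) (‖q‖ * ‖r‖)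
  unfold hessianSummand
  linarith

lemma cauchySchwarz_bound_le {Nb Na Y H X U V : ℝ} (hNb : 0 ≤ Nb) (hNa : 0 ≤ Na)
    (hY : 0 ≤ Y) (hH : 0 ≤ H) (hX : 0 ≤ X) (hU : 0 ≤ U) (hV : 0 ≤ V) :
    3 * (Nb * H + Na * X) * (Nb * U + Na * V) + Y * (Nb * U) + Na * V
      ≤ (3 * Nb ^ 2 + 3 * Na ^ 2 + Nb * Na + Y * Nb + Na) * (H + X + 1) * (U + V) := by
  set c := 3 * Nb ^ 2 + 3 * Na ^ 2 + Nb * Na + Y * Nb + Na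
  have hYNb : 0 ≤ Y * Nb := mul_nonneg hY hNb
  have hNbNa : 0 ≤ Nb * Na := mul_nonneg hNb hNa
  have hBB : 3 * Nb ^ 2 ≤ c := by nlinarith
  have hAA : 3 * Na ^ 2 ≤ c := by nlinarith
  have hBA : 3 * (Nb * Na) ≤ c := by nlinarith [sq_nonneg (Nb - Na)]
  have hy : Y * Nb ≤ c := by nlinarith
  have hA : Na ≤ c := by nlinarith
  calc 3 * (Nb * H + Na * X) * (Nb * U + Na * V) + Y * (Nb * U) + Na * V
      = 3 * Nb ^ 2 * (H * U) + 3 * (Nb * Na) * (H * V + X * U) + 3 * Na ^ 2 * (X * V)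
          + Y * Nb * U + Na * V := by ring
    _ ≤ c * (H * U) + c * (H * V + X * U) + c * (X * V) + c * U + c * V := by gcongr
    _ = c * (H + X + 1) * (U + V) := by ring

theorem hessian_quadratic_form_bound_general {m d₁ d₂ : ℕ}
    (B : Matrix (Fin m) (Fin d₁) ℂ) (A : Matrix (Fin m) (Fin d₂) ℂ) (y : Fin m → ℂ)
    (L : ℝ)
    (hL : L = ∑ j, (3 * rowNormSq B j ^ 2 + 3 * rowNormSq A j ^ 2
        + rowNormSq B j * rowNormSq A j
        + ‖y j‖ ^ 2 * rowNormSq B j + rowNormSq A j))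
    (h u : Fin d₁ → ℝ) (x v : Fin d₂ → ℝ) :
    ∑ j, (2 * ‖cMulVec B h j‖ ^ 2 + ‖cMulVec A x j‖ ^ 2
          + ‖y j‖ ^ 2) * ‖cMulVec B u j‖ ^ 2
      + (∑ j, (starRingEnd ℂ) (cMulVec B u j) ^ 2 * cMulVec B h j ^ 2).re
      + ∑ j, (‖cMulVec B h j‖ ^ 2 + 2 * ‖cMulVec A x j‖ ^ 2 + 1)
          * ‖cMulVec A v j‖ ^ 2
      + (∑ j, (starRingEnd ℂ) (cMulVec A v j) ^ 2 * cMulVec A x j ^ 2).re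
      + 2 * (∑ j, ((starRingEnd ℂ) (cMulVec B u j * cMulVec A v j)
            * (cMulVec B h j * cMulVec A x j)
          + (starRingEnd ℂ) (cMulVec B u j) * cMulVec A v j * cMulVec B h j
            * (starRingEnd ℂ) (cMulVec A x j))).re
      ≤ L * (∑ i, h i ^ 2 + ∑ i, x i ^ 2 + 1) * (∑ i, u i ^ 2 + ∑ i, v i ^ 2) := by
  have hsq {n : ℕ} (w : Fin n → ℝ) : 0 ≤ ∑ i, w i ^ 2 := sum_nonneg fun _ _ => sq_nonneg _
  rw [hL, sum_mul, sum_mul]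
  calc _ = ∑ j, hessianSummand (cMulVec B u j) (cMulVec A v j) (cMulVec B h j)
          (cMulVec A x j) (‖y j‖ ^ 2) := by
        simp only [hessianSummand, Complex.re_sum, Complex.add_re, sum_add_distrib, ← mul_sum]
    _ ≤ _ := by
      gcongr with j
      have hBj := rowNormSq_nonneg B j
      have hAj := rowNormSq_nonneg A j
      calc _ ≤ _ := hessianSummand_le _ _ _ _ _
        _ ≤ 3 * (rowNormSq B j * ∑ i, h i ^ 2 + rowNormSq A j * ∑ i, x i ^ 2)
              * (rowNormSq B j * ∑ i, u i ^ 2 + rowNormSq A j * ∑ i, v i ^ 2)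
              + ‖y j‖ ^ 2 * (rowNormSq B j * ∑ i, u i ^ 2) + rowNormSq A j * ∑ i, v i ^ 2 := by
          gcongr <;> apply norm_cMulVec_sq_le
        _ ≤ _ := cauchySchwarz_bound_le hBj hAj (sq_nonneg _)
          (hsq h) (hsq x) (hsq u) (hsq v)

/-- Final Hessian bound in the proof of Theorem 1: the quadratic form
`⟨(u,v), ∇²F₁(h,x)(u,v)⟩` is bounded by `L (‖h‖₂² + ‖x‖₂² + 1)(‖u‖₂² + ‖v‖₂²)`. -/
theorem hessian_quadratic_form_bound {m d₁ d₂ : ℕ} (hm : 0 < m) (hd₁ : 0 < d₁) (hd₂ : 0 < d₂)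
    (B : Matrix (Fin m) (Fin d₁) ℂ) (A : Matrix (Fin m) (Fin d₂) ℂ) (y : Fin m → ℂ)
    (L : ℝ)
    (hL : L = ∑ j, (3 * rowNormSq B j ^ 2 + 3 * rowNormSq A j ^ 2
        + rowNormSq B j * rowNormSq A j
        + ‖y j‖ ^ 2 * rowNormSq B j + rowNormSq A j))
    (h u : Fin d₁ → ℝ) (x v : Fin d₂ → ℝ) :
    ∑ j, (2 * ‖cMulVec B h j‖ ^ 2 + ‖cMulVec A x j‖ ^ 2
          + ‖y j‖ ^ 2) * ‖cMulVec B u j‖ ^ 2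
      + (∑ j, (starRingEnd ℂ) (cMulVec B u j) ^ 2 * cMulVec B h j ^ 2).re
      + ∑ j, (‖cMulVec B h j‖ ^ 2 + 2 * ‖cMulVec A x j‖ ^ 2 + 1)
          * ‖cMulVec A v j‖ ^ 2
      + (∑ j, (starRingEnd ℂ) (cMulVec A v j) ^ 2 * cMulVec A x j ^ 2).re
      + 2 * (∑ j, ((starRingEnd ℂ) (cMulVec B u j * cMulVec A v j)
            * (cMulVec B h j * cMulVec A x j)
          + (starRingEnd ℂ) (cMulVec B u j) * cMulVec A v j * cMulVec B h j
            * (starRingEnd ℂ) (cMulVec A x j))).re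
      ≤ L * (∑ i, h i ^ 2 + ∑ i, x i ^ 2 + 1) * (∑ i, u i ^ 2 + ∑ i, v i ^ 2) :=
  hessian_quadratic_form_bound_general B A y L hL h u x v
end
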